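/- Let B be a skew brace of nilpotent type. Then the following are equivalent: (1) B is annihilator nilpotent; (2) B is both left nilpotent and right nilpotent; (3) B is strongly nilpotent. -/

import Mathlib

/-- A skew brace: a type with two group structures `(B,+)` and `(B,∘)`
(the multiplicative group is written with `*`) sharing the same underlying set,
such that `a ∘ (b + c) = a ∘ b - a + a ∘ c`. -/
class SkewBrace (B : Type*) extends AddGroup B, Group B where
  circ_add : ∀ a b c : B, a * (b + c) = a * b - a + a * c

namespace SkewBrace

variable {B : Type*} [SkewBrace B]

/-- `lam a b = -a + a ∘ b`, i.e. `λ_a(b)`. -/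
def lam (a b : B) : B := -a + a * b

/-- `a * b` (the star operation) `= λ_a(b) - b = -a + a ∘ b - b`. -/
def starOp (a b : B) : B := -a + a * b - b

/-- `X * Y` : the additive subgroup generated by all `x * y`, `x ∈ X`, `y ∈ Y`,
regarded as a set. -/
def starSpan (X Y : Set B) : Set B :=
  (AddSubgroup.closure {z : B | ∃ x ∈ X, ∃ y ∈ Y, z = starOp x y} : AddSubgroup B)

/-- `[X,Y]₊` : the additive subgroup generated by all additive commutators
`x + y - x - y`, `x ∈ X`, `y ∈ Y`, regarded as a set. -/
def addCommSpan (X Y : Set B) : Set B :=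
  (AddSubgroup.closure {z : B | ∃ x ∈ X, ∃ y ∈ Y, z = x + y - x - y} : AddSubgroup B)

/-- A sub skew brace: a subset containing `0` and closed under both group
operations and both inverses. -/
def IsSubSkewBrace (S : Set B) : Prop :=
  0 ∈ S ∧ (∀ a ∈ S, ∀ b ∈ S, a + b ∈ S) ∧ (∀ a ∈ S, -a ∈ S) ∧
    (∀ a ∈ S, ∀ b ∈ S, a * b ∈ S) ∧ (∀ a ∈ S, a⁻¹ ∈ S)

/-- An ideal: a sub skew brace that is normal in `(B,+)` and in `(B,∘)` and
invariant under all `λ_a`. -/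
def IsIdeal (S : Set B) : Prop :=
  IsSubSkewBrace S ∧ (∀ a : B, ∀ i ∈ S, a + i - a ∈ S) ∧
    (∀ a : B, ∀ i ∈ S, a * i * a⁻¹ ∈ S) ∧ (∀ a : B, ∀ i ∈ S, lam a i ∈ S)

/-- The annihilator `Ann(B) = {x | x∘a = a∘x = x+a = a+x for all a}`. -/
def annSet (B : Type*) [SkewBrace B] : Set B :=
  {x | ∀ a : B, x * a = a * x ∧ x * a = x + a ∧ x + a = a + x}

/-- The annihilator series: `Ann₀(B) = 0` and `Ann_{n+1}(B)` is the preimage of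
`Ann(B/Annₙ(B))` under the quotient map; membership is expressed via coset
equalities modulo `Annₙ(B)`. -/
def annSeries (B : Type*) [SkewBrace B] : ℕ → Set B
  | 0 => {0}
  | n + 1 => {x | ∀ a : B,
      x * a - a * x ∈ annSeries B n ∧
      x * a - (x + a) ∈ annSeries B n ∧
      (x + a) - (a + x) ∈ annSeries B n}

/-- `B` is annihilator nilpotent if `Annₙ(B) = B` for some `n`. -/
def AnnNilpotent (B : Type*) [SkewBrace B] : Prop :=
  ∃ n : ℕ, annSeries B n = Set.univ

/-- `leftPow B n` is `B^{n+1}`: `B¹ = B`, `B^{n+1} = B * Bⁿ`. -/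
def leftPow (B : Type*) [SkewBrace B] : ℕ → Set B
  | 0 => Set.univ
  | n + 1 => starSpan Set.univ (leftPow B n)

/-- `rightPow B n` is `B⁽ⁿ⁺¹⁾`: `B⁽¹⁾ = B`, `B⁽ⁿ⁺¹⁾ = B⁽ⁿ⁾ * B`. -/
def rightPow (B : Type*) [SkewBrace B] : ℕ → Set B
  | 0 => Set.univ
  | n + 1 => starSpan (rightPow B n) Set.univ

/-- `B` is left nilpotent if `Bⁿ = 0` for some `n ≥ 1`. -/
def LeftNilpotent (B : Type*) [SkewBrace B] : Prop :=
  ∃ n : ℕ, leftPow B n = ({0} : Set B)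

/-- `B` is right nilpotent if `B⁽ⁿ⁾ = 0` for some `n ≥ 1`. -/
def RightNilpotent (B : Type*) [SkewBrace B] : Prop :=
  ∃ n : ℕ, rightPow B n = ({0} : Set B)

/-- `strongPow B n` is `B^[n+1]`: `B^[1] = B`, and `B^[n+1]` is the additive
subgroup generated by `⋃_{i=1}^{n} B^[i] * B^[n+1-i]`. -/
def strongPow (B : Type*) [SkewBrace B] : ℕ → Set B
  | 0 => Set.univ
  | n + 1 => (AddSubgroup.closure (⋃ j : Fin (n + 1),
      {z : B | ∃ x ∈ strongPow B j.1, ∃ y ∈ strongPow B (n - j.1), z = starOp x y}) :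
        AddSubgroup B)
  decreasing_by
  · exact j.isLt
  · omega

/-- `B` is strongly nilpotent if `B^[n] = 0` for some `n ≥ 1`. -/
def StronglyNilpotent (B : Type*) [SkewBrace B] : Prop :=
  ∃ n : ℕ, strongPow B n = ({0} : Set B)

/-- `gammaAux B n` is `Γ_[n+1](B)`: `Γ_[1](B) = B` and, for `n ≥ 2`, `Γ_[n](B)` is
the additive subgroup generated by the sets `Γ_[i](B) * Γ_[n-i](B)` and
`[Γ_[i](B), Γ_[n-i](B)]₊` for `1 ≤ i ≤ n-1`. -/
def gammaAux (B : Type*) [SkewBrace B] : ℕ → Set B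
  | 0 => Set.univ
  | n + 1 => (AddSubgroup.closure (⋃ j : Fin (n + 1),
      {z : B | ∃ x ∈ gammaAux B j.1, ∃ y ∈ gammaAux B (n - j.1),
        z = starOp x y ∨ z = x + y - x - y}) : AddSubgroup B)
  decreasing_by
  · exact j.isLt
  · omega

/-- `Γ_[n](B)` for `n ≥ 1` (one-based indexing as in the paper). -/
def gammaBr (B : Type*) [SkewBrace B] (n : ℕ) : Set B := gammaAux B (n - 1)

/-- `B` is finitely generated as a skew brace: there is a finite subset whose
smallest containing sub skew brace is `B` itself. -/
def SBFinitelyGenerated (B : Type*) [SkewBrace B] : Prop :=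
  ∃ S : Set B, S.Finite ∧ ∀ T : Set B, IsSubSkewBrace T → S ⊆ T → T = Set.univ

/-- `B` satisfies the ascending chain condition on sub skew braces. -/
def ACCSubSkewBrace (B : Type*) [SkewBrace B] : Prop :=
  ∀ f : ℕ → Set B, (∀ n, IsSubSkewBrace (f n)) → (∀ n, f n ⊆ f (n + 1)) →
    ∃ N : ℕ, ∀ n, N ≤ n → f n = f N

end SkewBrace

/-!
(1 ⇒ 3) The annihilator series `Ann_j` consists of ideals, and both `Ann_{j+1} * B` and
`B * Ann_{j+1}` lie in `Ann_j`. Every generator `x * y` of `B^[n]` has a factor in some `B^[i]`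
with `2 i ≥ n`, so `B^[2^k] ⊆ Ann_{c-k}` when `Ann_c = B`.

(3 ⇒ 2) `Bⁿ` and `B⁽ⁿ⁾` are contained in `B^[n]`.

(2 ⇒ 1) With the 0-based indexing of `rightPow` and `leftPow`, suppose `rightPow B s = 0`,
`leftPow B m = 0` and that the lower central series `γ_c` of `(B,+)` reaches `0` at `c = t`.
Give the elements of `rightPow B a ∩ leftPow B b ∩ γ_c` the weight `(a t + c) m + b`, i.e. order
`(a, c, b)` lexicographically. On nonzero elements (`b < m`, `c < t`), `x * y` raises the weight through `a`
if `x` is the weighted factor and through `b` if `y` is, and an additive commutator raises it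
through `c`. So the additive subgroups `Ψ_d` generated by the elements of weight at least `d`
form a normal series from `B` down to `Ψ_{s t m} = 0` with `Ψ_d * B`, `B * Ψ_d` and `[Ψ_d, B]₊`
inside `Ψ_{d+1}`, which forces `Ψ_d ⊆ Ann_{s t m - d}`. As `*` is not additive in its left
argument, `Ψ_d * B ⊆ Ψ_{d+1}` needs that `Ψ_{d+1}` is a left ideal and the expansion
`(x₁ + x₂) * y = x₁ * (w * y) + w * y + x₁ * y` with `w = λ_{x₁⁻¹} x₂`.
-/

section AddGroup

variable {G : Type*} [AddGroup G]

theorem addCommutator_add_left (x₁ x₂ y : G) :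
    x₁ + x₂ + y - (x₁ + x₂) - y = x₁ + (x₂ + y - x₂ - y) - x₁ + (x₁ + y - x₁ - y) := by
  simp [sub_eq_add_neg, add_assoc]

theorem addCommutator_neg_left (x y : G) : -x + y - -x - y = -x + -(x + y - x - y) + x := by
  simp [sub_eq_add_neg, add_assoc]

theorem add_sub_add_eq (x a : G) : x + a - (a + x) = x + a - x - a := by
  simp [sub_eq_add_neg, add_assoc]

namespace AddSubgroup

theorem Normal.add_sub_mem {N : AddSubgroup G} (hN : N.Normal) (c : G) {x : G} (hx : x ∈ N) :
    c + x - c ∈ N := by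
  simpa only [sub_eq_add_neg] using hN.conj_mem x hx c

theorem normal_closure_of_add_sub_mem {X : Set G} (h : ∀ c, ∀ x ∈ X, c + x - c ∈ closure X) :
    (closure X).Normal := by
  refine ⟨fun x hx c => ?_⟩
  induction hx using closure_induction with
  | mem x hx => simpa [sub_eq_add_neg] using h c x hx
  | zero => simp
  | add x y _ _ hx hy => simpa [add_assoc] using add_mem hx hy
  | neg x _ hx =>
    rw [show c + -x + -c = -(c + x + -c) by simp [add_assoc]]
    exact neg_mem hx

theorem addCommutator_mem_of_mem_closure {X : Set G} {N : AddSubgroup G} (hN : N.Normal)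
    (h : ∀ x ∈ X, ∀ y, x + y - x - y ∈ N) {x : G} (hx : x ∈ closure X) (y : G) :
    x + y - x - y ∈ N := by
  induction hx using closure_induction with
  | mem x hx => exact h x hx y
  | zero => simp
  | add x₁ x₂ _ _ h₁ h₂ =>
    rw [addCommutator_add_left]
    exact add_mem (hN.add_sub_mem x₁ h₂) h₁
  | neg x _ hx =>
    rw [addCommutator_neg_left]
    simpa [sub_eq_add_neg] using hN.add_sub_mem (-x) (neg_mem hx)

open scoped addCommutatorElement in
theorem addCommutator_mem_lowerCentralSeries_succ {n : ℕ} {x : G}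
    (hx : x ∈ (⊤ : AddSubgroup G).lowerCentralSeries n) (y : G) :
    x + y - x - y ∈ (⊤ : AddSubgroup G).lowerCentralSeries (n + 1) := by
  simpa [addCommutatorElement_def, sub_eq_add_neg] using
    addCommutator_mem_addCommutator hx (mem_top y)

theorem map_mem_lowerCentralSeries (ϕ : G ≃+ G) {n : ℕ} {x : G}
    (hx : x ∈ (⊤ : AddSubgroup G).lowerCentralSeries n) :
    ϕ x ∈ (⊤ : AddSubgroup G).lowerCentralSeries n :=
  characteristic_iff_map_le.mp inferInstance ϕ ⟨x, hx, rfl⟩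

theorem eq_zero_of_mem_lowerCentralSeries {t c : ℕ}
    (ht : (⊤ : AddSubgroup G).lowerCentralSeries t = ⊥) (htc : t ≤ c) {x : G}
    (hx : x ∈ (⊤ : AddSubgroup G).lowerCentralSeries c) : x = 0 := by
  simpa [ht] using lowerCentralSeries_antitone ⊤ htc hx

end AddSubgroup

theorem AddGroup.exists_lowerCentralSeries_eq_bot_of_multiplicative
    (h : Group.IsNilpotent (Multiplicative G)) :
    ∃ n, (⊤ : AddSubgroup G).lowerCentralSeries n = ⊥ := by
  obtain ⟨n, hn⟩ := Subgroup.nilpotent_iff_lowerCentralSeries.mp h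
  have hcentral : AddSubgroup.IsDescendingCentralSeries
      fun k => Subgroup.toAddSubgroup' ((⊤ : Subgroup (Multiplicative G)).lowerCentralSeries k) :=
    ⟨by simp, fun x k hx g => Subgroup.commutator_mem_commutator (g₁ := Multiplicative.ofAdd x)
      (g₂ := Multiplicative.ofAdd g) hx (Subgroup.mem_top _)⟩
  exact ⟨n, le_bot_iff.mp (by
    simpa [hn] using AddSubgroup.descending_central_series_ge_lower _ hcentral n)⟩

end AddGroup

namespace SkewBrace

variable {B : Type*} [SkewBrace B]

open AddSubgroup

section Arithmetic

theorem mul_zero_eq_self (a : B) : a * 0 = a := by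
  have h := circ_add a 0 0
  rw [add_zero] at h
  exact sub_eq_zero.mp (right_eq_add.mp h)

theorem one_eq_zero : (1 : B) = 0 := by
  simpa using (mul_zero_eq_self (1 : B)).symm

theorem zero_mul_eq_self (a : B) : (0 : B) * a = a := by
  rw [← one_eq_zero, one_mul]

theorem mul_eq_add_lam (a b : B) : a * b = a + lam a b := by
  simp [lam]

theorem lam_add (a b c : B) : lam a (b + c) = lam a b + lam a c := by
  simp only [lam, circ_add, sub_eq_add_neg, add_assoc]

theorem lam_zero (a : B) : lam a 0 = 0 := by
  simp [lam, mul_zero_eq_self]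

theorem lam_neg (a b : B) : lam a (-b) = -lam a b :=
  eq_neg_of_add_eq_zero_right (by rw [← lam_add, add_neg_cancel, lam_zero])

theorem lam_mul (a b c : B) : lam (a * b) c = lam a (lam b c) := by
  have h : lam a (lam b c) = lam a (-b) + lam a (b * c) := lam_add a (-b) (b * c)
  rw [h, lam_neg]
  simp only [lam, neg_add_rev, neg_neg, mul_assoc, add_assoc, add_neg_cancel_left]

theorem lam_one (b : B) : lam 1 b = b := by
  simp [lam, one_eq_zero, zero_mul_eq_self]

theorem lam_inv_lam (a b : B) : lam a⁻¹ (lam a b) = b := by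
  rw [← lam_mul, inv_mul_cancel, lam_one]

theorem lam_lam_inv (a b : B) : lam a (lam a⁻¹ b) = b := by
  rw [← lam_mul, mul_inv_cancel, lam_one]

theorem lam_inv_self (a : B) : lam a a⁻¹ = -a := by
  have h := mul_eq_add_lam a a⁻¹
  rw [mul_inv_cancel, one_eq_zero] at h
  exact (neg_eq_of_add_eq_zero_right h.symm).symm

theorem inv_eq_lam_neg (a : B) : a⁻¹ = lam a⁻¹ (-a) := by
  rw [← lam_inv_self, lam_inv_lam]

theorem add_eq_mul_lam (a b : B) : a + b = a * lam a⁻¹ b := by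
  rw [mul_eq_add_lam, lam_lam_inv]

def lamEquiv (g : B) : B ≃+ B where
  toFun := lam g
  invFun := lam g⁻¹
  left_inv := lam_inv_lam g
  right_inv := lam_lam_inv g
  map_add' := lam_add g

theorem lam_eq_starOp_add (a b : B) : lam a b = starOp a b + b := by
  simp [starOp, lam]

theorem starOp_eq_lam_sub (a b : B) : starOp a b = lam a b - b := by
  simp [lam_eq_starOp_add]

theorem starOp_zero (a : B) : starOp a 0 = 0 := by
  simp [starOp_eq_lam_sub, lam_zero]

theorem zero_starOp (b : B) : starOp 0 b = 0 := by
  simp [starOp, zero_mul_eq_self]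

theorem starOp_add (a b c : B) : starOp a (b + c) = starOp a b + (b + starOp a c - b) := by
  simp only [starOp_eq_lam_sub, lam_add, sub_eq_add_neg, neg_add_rev, add_assoc,
    neg_add_cancel_left]

theorem starOp_neg (a b : B) : starOp a (-b) = -b + -starOp a b + b := by
  simp [starOp_eq_lam_sub, lam_neg, sub_eq_add_neg]

theorem mul_starOp (a b c : B) :
    starOp (a * b) c = starOp a (starOp b c) + starOp b c + starOp a c := by
  simp [starOp_eq_lam_sub, lam_mul, sub_eq_add_neg, lam_add, lam_neg, add_assoc]

theorem add_starOp (a b c : B) :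
    starOp (a + b) c = starOp a (starOp (lam a⁻¹ b) c) + starOp (lam a⁻¹ b) c + starOp a c := by
  rw [add_eq_mul_lam, mul_starOp]

theorem starOp_eq_neg_inv (a c : B) :
    starOp a c = -(starOp a (starOp a⁻¹ c) + starOp a⁻¹ c) := by
  refine eq_neg_of_add_eq_zero_right ?_
  rw [← mul_starOp, mul_inv_cancel, one_eq_zero, zero_starOp]

theorem lam_starOp (a x y : B) : lam a (starOp x y) = starOp (a * x * a⁻¹) (lam a y) := by
  rw [starOp_eq_lam_sub, starOp_eq_lam_sub, sub_eq_add_neg, lam_add, lam_neg, ← lam_mul,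
    ← lam_mul, inv_mul_cancel_right, ← sub_eq_add_neg]

theorem mul_mul_inv (a b : B) : a * b * a⁻¹ = a + (lam a b + lam a (starOp b a⁻¹)) - a := by
  rw [mul_eq_add_lam (a * b), lam_mul, lam_eq_starOp_add b a⁻¹, lam_add, lam_inv_self,
    mul_eq_add_lam a b]
  simp [add_assoc, sub_eq_add_neg]

theorem add_starOp_sub (x y c : B) : c + starOp x y - c = -starOp x c + starOp x (c + y) := by
  simp only [starOp_eq_lam_sub, lam_add, sub_eq_add_neg, neg_add_rev, neg_neg, add_assoc,
    neg_add_cancel_left]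

theorem mul_sub_mul_eq (x a : B) :
    x * a - a * x = (x + starOp x a - x) + ((x + a - x - a) + (a + -starOp a x - a)) := by
  rw [mul_eq_add_lam x a, mul_eq_add_lam a x, starOp_eq_lam_sub, starOp_eq_lam_sub]
  simp [sub_eq_add_neg, add_assoc]

theorem mul_sub_add_eq (x a : B) : x * a - (x + a) = x + starOp x a - x := by
  rw [mul_eq_add_lam, starOp_eq_lam_sub]
  simp [sub_eq_add_neg, add_assoc]

theorem inv_lam_neg (g x : B) : (lam g (-x))⁻¹ = lam ((lam g (-x))⁻¹ * g) x := by
  conv_lhs => rw [inv_eq_lam_neg]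
  rw [lam_mul, lam_neg g x, neg_neg]

end Arithmetic

section Ideals

structure IsLeftIdeal (S : Set B) : Prop where
  zero_mem : (0 : B) ∈ S
  add_mem {x y : B} : x ∈ S → y ∈ S → x + y ∈ S
  neg_mem {x : B} : x ∈ S → -x ∈ S
  lam_mem (g : B) {x : B} : x ∈ S → lam g x ∈ S

/-- Ideals, characterized additively: normality in `(B,∘)` is replaced by `S * B ⊆ S`. -/
structure IsAddIdeal (S : Set B) : Prop extends IsLeftIdeal S where
  conj_mem (c : B) {x : B} : x ∈ S → c + x - c ∈ S
  starOp_mem {x : B} : x ∈ S → ∀ a, starOp x a ∈ S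

variable {S : Set B}

def IsLeftIdeal.toAddSubgroup (hS : IsLeftIdeal S) : AddSubgroup B where
  carrier := S
  zero_mem' := hS.zero_mem
  add_mem' := hS.add_mem
  neg_mem' := hS.neg_mem

theorem IsLeftIdeal.sub_mem (hS : IsLeftIdeal S) {x y : B} (hx : x ∈ S) (hy : y ∈ S) :
    x - y ∈ S :=
  hS.toAddSubgroup.sub_mem hx hy

theorem IsLeftIdeal.starOp_mem_right (hS : IsLeftIdeal S) (a : B) {x : B} (hx : x ∈ S) :
    starOp a x ∈ S := by
  rw [starOp_eq_lam_sub]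
  exact hS.sub_mem (hS.lam_mem a hx) hx

theorem IsAddIdeal.normal (hS : IsAddIdeal S) : hS.toAddSubgroup.Normal :=
  ⟨fun x hx c => by
    have h := hS.conj_mem c hx
    rwa [sub_eq_add_neg] at h⟩

theorem IsAddIdeal.mul_mul_inv_mem (hS : IsAddIdeal S) (g : B) {x : B} (hx : x ∈ S) :
    g * x * g⁻¹ ∈ S := by
  rw [mul_mul_inv]
  exact hS.conj_mem g (hS.add_mem (hS.lam_mem g hx) (hS.lam_mem g (hS.starOp_mem hx g⁻¹)))

theorem IsAddIdeal.addCommutator_mem (hS : IsAddIdeal S) {x : B} (hx : x ∈ S) (a : B) :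
    x + a - x - a ∈ S := by
  rw [show x + a - x - a = x + (a + -x - a) by simp [sub_eq_add_neg, add_assoc]]
  exact hS.add_mem hx (hS.conj_mem a (hS.neg_mem hx))

theorem isLeftIdeal_univ : IsLeftIdeal (Set.univ : Set B) :=
  ⟨trivial, fun _ _ => trivial, fun _ => trivial, fun _ _ _ => trivial⟩

theorem isAddIdeal_univ : IsAddIdeal (Set.univ : Set B) :=
  ⟨isLeftIdeal_univ, fun _ _ _ => trivial, fun _ _ => trivial⟩

theorem IsLeftIdeal.inter {S T : Set B} (hS : IsLeftIdeal S) (hT : IsLeftIdeal T) :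
    IsLeftIdeal (S ∩ T) :=
  ⟨⟨hS.zero_mem, hT.zero_mem⟩, fun hx hy => ⟨hS.add_mem hx.1 hy.1, hT.add_mem hx.2 hy.2⟩,
    fun hx => ⟨hS.neg_mem hx.1, hT.neg_mem hx.2⟩,
    fun g _ hx => ⟨hS.lam_mem g hx.1, hT.lam_mem g hx.2⟩⟩

theorem lam_mem_closure {X : Set B} (h : ∀ g, ∀ x ∈ X, lam g x ∈ X) (g : B) {x : B}
    (hx : x ∈ closure X) : lam g x ∈ closure X :=
  (closure_le (K := (closure X).comap (lamEquiv g).toAddMonoidHom)).mpr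
    (fun y hy => subset_closure (h g y hy)) hx

theorem isLeftIdeal_closure {X : Set B} (h : ∀ g, ∀ x ∈ X, lam g x ∈ X) :
    IsLeftIdeal (closure X : Set B) :=
  ⟨zero_mem _, add_mem, neg_mem, lam_mem_closure h⟩

theorem isLeftIdeal_starSpan_univ {X : Set B} (hX : IsLeftIdeal X) :
    IsLeftIdeal (starSpan Set.univ X) := by
  refine isLeftIdeal_closure ?_
  rintro g _ ⟨x, -, y, hy, rfl⟩
  exact ⟨g * x * g⁻¹, trivial, lam g y, hX.lam_mem g hy, lam_starOp g x y⟩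

theorem IsAddIdeal.starSpan_univ {I : Set B} (hI : IsAddIdeal I) :
    IsAddIdeal (starSpan I Set.univ) := by
  have hsub : starSpan I Set.univ ⊆ I := (closure_le (K := hI.toAddSubgroup)).mpr <| by
    rintro _ ⟨x, hx, y, -, rfl⟩
    exact hI.starOp_mem hx y
  have hN : (closure {z | ∃ x ∈ I, ∃ y ∈ Set.univ, z = starOp x y}).Normal :=
    normal_closure_of_add_sub_mem <| by
      rintro c _ ⟨x, hx, y, -, rfl⟩
      rw [add_starOp_sub]
      exact add_mem (neg_mem (subset_closure ⟨x, hx, c, trivial, rfl⟩))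
        (subset_closure ⟨x, hx, c + y, trivial, rfl⟩)
  refine ⟨isLeftIdeal_closure ?_, fun c _ hx => hN.add_sub_mem c hx,
    fun hx a => subset_closure ⟨_, hsub hx, a, trivial, rfl⟩⟩
  rintro g _ ⟨x, hx, y, -, rfl⟩
  exact ⟨g * x * g⁻¹, hI.mul_mul_inv_mem g hx, lam g y, trivial, lam_starOp g x y⟩

theorem starOp_mem_of_mem_closure_right {X : Set B} {N : AddSubgroup B} (hN : N.Normal)
    (h : ∀ x, ∀ y ∈ X, starOp x y ∈ N) {y : B} (hy : y ∈ closure X) (x : B) :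
    starOp x y ∈ N := by
  induction hy using closure_induction with
  | mem y hy => exact h x y hy
  | zero => simp [starOp_zero]
  | add y₁ y₂ _ _ h₁ h₂ =>
    rw [starOp_add]
    exact add_mem h₁ (hN.add_sub_mem y₁ h₂)
  | neg y _ hy =>
    rw [starOp_neg]
    simpa [sub_eq_add_neg] using hN.add_sub_mem (-y) (neg_mem hy)

theorem starOp_mem_of_mem_closure_left {X : Set B} {N : Set B} (hX : ∀ g, ∀ x ∈ X, lam g x ∈ X)
    (hN : IsLeftIdeal N) (h : ∀ x ∈ X, ∀ y, starOp x y ∈ N) {x : B} (hx : x ∈ closure X)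
    (y : B) : starOp x y ∈ N := by
  suffices ∀ g y, starOp (lam g x) y ∈ N by simpa [lam_one] using this 1 y
  induction hx using closure_induction with
  | mem x hx => exact fun g y => h _ (hX g x hx) y
  | zero => simp [lam_zero, zero_starOp, hN.zero_mem]
  | add x₁ x₂ _ _ h₁ h₂ =>
    intro g y
    rw [lam_add, add_starOp, ← lam_mul]
    exact hN.add_mem (hN.add_mem (h₁ g _) (h₂ _ y)) (h₁ g y)
  | neg x _ hx =>
    intro g y
    have hinv : starOp (lam g (-x))⁻¹ y ∈ N := by
      rw [inv_lam_neg]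
      exact hx _ y
    rw [starOp_eq_neg_inv]
    exact hN.neg_mem (hN.add_mem (hN.starOp_mem_right _ hinv) hinv)

end Ideals

section Series

theorem isLeftIdeal_leftPow : ∀ n, IsLeftIdeal (leftPow B n)
  | 0 => isLeftIdeal_univ
  | n + 1 => isLeftIdeal_starSpan_univ (isLeftIdeal_leftPow n)

theorem isAddIdeal_rightPow : ∀ n, IsAddIdeal (rightPow B n)
  | 0 => isAddIdeal_univ
  | n + 1 => (isAddIdeal_rightPow n).starSpan_univ

theorem isLeftIdeal_lowerCentralSeries (c : ℕ) :
    IsLeftIdeal ((⊤ : AddSubgroup B).lowerCentralSeries c : Set B) :=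
  ⟨zero_mem _, add_mem, neg_mem, fun g _ hx => map_mem_lowerCentralSeries (lamEquiv g) hx⟩

theorem starOp_mem_leftPow_succ (x : B) {n : ℕ} {y : B} (hy : y ∈ leftPow B n) :
    starOp x y ∈ leftPow B (n + 1) :=
  subset_closure ⟨x, trivial, y, hy, rfl⟩

theorem starOp_mem_rightPow_succ {n : ℕ} {x : B} (hx : x ∈ rightPow B n) (y : B) :
    starOp x y ∈ rightPow B (n + 1) :=
  subset_closure ⟨x, hx, y, trivial, rfl⟩

theorem leftPow_antitone : Antitone (leftPow B) := by
  refine antitone_nat_of_succ_le fun n => ?_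
  induction n with
  | zero => exact Set.subset_univ _
  | succ n ih =>
    exact closure_mono (by rintro _ ⟨x, -, y, hy, rfl⟩; exact ⟨x, trivial, y, ih hy, rfl⟩)

theorem rightPow_antitone : Antitone (rightPow B) :=
  antitone_nat_of_succ_le fun n =>
    (closure_le (K := (isAddIdeal_rightPow n).toAddSubgroup)).mpr
      (by rintro _ ⟨x, hx, y, -, rfl⟩; exact (isAddIdeal_rightPow n).starOp_mem hx y)

theorem eq_zero_of_mem_leftPow {m n : ℕ} (hm : leftPow B m = {0}) (hmn : m ≤ n) {x : B}
    (hx : x ∈ leftPow B n) : x = 0 := by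
  simpa [hm] using leftPow_antitone hmn hx

theorem eq_zero_of_mem_rightPow {m n : ℕ} (hm : rightPow B m = {0}) (hmn : m ≤ n) {x : B}
    (hx : x ∈ rightPow B n) : x = 0 := by
  simpa [hm] using rightPow_antitone hmn hx

end Series

section Annihilator

/-- For an ideal `S`, the preimage of `Ann(B/S)`; `annSeries B (n + 1)` is
`annNext (annSeries B n)` by definition. -/
def annNext (S : Set B) : Set B :=
  {x | ∀ a, x * a - a * x ∈ S ∧ x * a - (x + a) ∈ S ∧ x + a - (a + x) ∈ S}

theorem annNext_mono {S T : Set B} (h : S ⊆ T) : annNext S ⊆ annNext T :=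
  fun _ hx a => ⟨h (hx a).1, h (hx a).2.1, h (hx a).2.2⟩

theorem mem_annNext_iff {N : AddSubgroup B} (hN : N.Normal) {x : B} :
    x ∈ annNext (N : Set B) ↔ ∀ a, starOp x a ∈ N ∧ starOp a x ∈ N ∧ x + a - x - a ∈ N := by
  have hconj : ∀ c y, c + y - c ∈ N ↔ y ∈ N := fun c y => by
    rw [sub_eq_add_neg, hN.mem_comm_iff, neg_add_cancel_left]
  simp only [annNext, Set.mem_ofPred_eq, SetLike.mem_coe, mul_sub_mul_eq, mul_sub_add_eq,
    add_sub_add_eq]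
  refine forall_congr' fun a => ⟨fun ⟨h1, h2, h3⟩ => ?_, fun ⟨h1, h2, h3⟩ => ?_⟩
  · rw [add_mem_cancel_left h2, add_mem_cancel_left h3, hconj, neg_mem_iff] at h1
    exact ⟨(hconj x _).1 h2, h1, h3⟩
  · exact ⟨add_mem ((hconj x _).2 h1) (add_mem h3 ((hconj a _).2 (neg_mem h2))),
      (hconj x _).2 h1, h3⟩

variable {S : Set B}

theorem IsAddIdeal.mem_annNext_iff (hS : IsAddIdeal S) {x : B} :
    x ∈ annNext S ↔ ∀ a, starOp x a ∈ S ∧ starOp a x ∈ S ∧ x + a - x - a ∈ S :=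
  SkewBrace.mem_annNext_iff hS.normal

theorem IsAddIdeal.subset_annNext (hS : IsAddIdeal S) : S ⊆ annNext S :=
  fun _ hx => hS.mem_annNext_iff.2 fun a =>
    ⟨hS.starOp_mem hx a, hS.starOp_mem_right a hx, hS.addCommutator_mem hx a⟩

theorem IsAddIdeal.add_mem_annNext (hS : IsAddIdeal S) {x y : B} (hx : x ∈ annNext S)
    (hy : y ∈ annNext S) (hw : lam x⁻¹ y ∈ annNext S) : x + y ∈ annNext S := by
  rw [hS.mem_annNext_iff] at hx hy hw ⊢
  refine fun a => ⟨?_, ?_, ?_⟩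
  · rw [add_starOp]
    exact hS.add_mem (hS.add_mem (hx _).1 (hw a).1) (hx a).1
  · rw [starOp_add]
    exact hS.add_mem (hx a).2.1 (hS.conj_mem x (hy a).2.1)
  · rw [addCommutator_add_left]
    exact hS.add_mem (hS.conj_mem x (hy a).2.2) (hx a).2.2

theorem IsAddIdeal.add_mem_annNext_of_mem (hS : IsAddIdeal S) {x s : B} (hx : x ∈ annNext S)
    (hs : s ∈ S) : x + s ∈ annNext S :=
  hS.add_mem_annNext hx (hS.subset_annNext hs) (hS.subset_annNext (hS.lam_mem _ hs))

theorem IsAddIdeal.lam_mem_annNext (hS : IsAddIdeal S) (g : B) {x : B} (hx : x ∈ annNext S) :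
    lam g x ∈ annNext S := by
  have hs : -x + starOp g x + x ∈ S := by
    simpa [sub_eq_add_neg] using hS.conj_mem (-x) (hS.mem_annNext_iff.1 hx g).2.1
  rw [lam_eq_starOp_add, show starOp g x + x = x + (-x + starOp g x + x) by simp [add_assoc]]
  exact hS.add_mem_annNext_of_mem hx hs

theorem IsAddIdeal.neg_mem_annNext (hS : IsAddIdeal S) {x : B} (hx : x ∈ annNext S) :
    -x ∈ annNext S := by
  have hinv : (-x)⁻¹ ∈ annNext S := by
    rw [inv_eq_lam_neg, neg_neg]
    exact hS.lam_mem_annNext _ hx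
  rw [hS.mem_annNext_iff] at hx hinv ⊢
  refine fun a => ⟨?_, ?_, ?_⟩
  · rw [starOp_eq_neg_inv]
    exact hS.neg_mem (hS.add_mem (hS.starOp_mem_right _ (hinv a).1) (hinv a).1)
  · rw [starOp_neg]
    simpa [sub_eq_add_neg] using hS.conj_mem (-x) (hS.neg_mem (hx a).2.1)
  · rw [addCommutator_neg_left]
    simpa [sub_eq_add_neg] using hS.conj_mem (-x) (hS.neg_mem (hx a).2.2)

theorem IsAddIdeal.annNext (hS : IsAddIdeal S) : IsAddIdeal (annNext S) where
  zero_mem := hS.subset_annNext hS.zero_mem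
  add_mem hx hy := hS.add_mem_annNext hx hy (hS.lam_mem_annNext _ hy)
  neg_mem := hS.neg_mem_annNext
  lam_mem := hS.lam_mem_annNext
  conj_mem c x hx := by
    rw [show c + x - c = x + (-x + c - -x - c) by simp [sub_eq_add_neg, add_assoc]]
    exact hS.add_mem_annNext_of_mem hx (hS.mem_annNext_iff.1 (hS.neg_mem_annNext hx) c).2.2
  starOp_mem hx a := hS.subset_annNext (hS.mem_annNext_iff.1 hx a).1

theorem isAddIdeal_zero : IsAddIdeal ({0} : Set B) where
  zero_mem := rfl
  add_mem hx hy := by simp_all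
  neg_mem hx := by simp_all
  lam_mem g x hx := by simp_all [lam_zero]
  conj_mem c x hx := by simp_all
  starOp_mem hx a := by simp_all [zero_starOp]

theorem isAddIdeal_annSeries : ∀ n, IsAddIdeal (annSeries B n)
  | 0 => isAddIdeal_zero
  | n + 1 => (isAddIdeal_annSeries n).annNext

theorem starOp_mem_annSeries {j : ℕ} {x : B} (hx : x ∈ annSeries B (j + 1)) (y : B) :
    starOp x y ∈ annSeries B j ∧ starOp y x ∈ annSeries B j :=
  let h := (isAddIdeal_annSeries j).mem_annNext_iff.1 hx y
  ⟨h.1, h.2.1⟩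

theorem subset_annSeries_of_filtration (H : ℕ → AddSubgroup B) (hN : ∀ d, (H d).Normal)
    (hH : ∀ d, ∀ x ∈ H d, ∀ a,
      starOp x a ∈ H (d + 1) ∧ starOp a x ∈ H (d + 1) ∧ x + a - x - a ∈ H (d + 1)) :
    ∀ k d, H (d + k) = ⊥ → (H d : Set B) ⊆ annSeries B k
  | 0, d, hd => by simp only [Nat.add_zero] at hd; simp [hd, annSeries]
  | k + 1, d, hd => fun x hx =>
    annNext_mono (subset_annSeries_of_filtration H hN hH k (d + 1) (by rwa [add_right_comm]))
      ((mem_annNext_iff (hN (d + 1))).2 (hH d x hx))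

theorem annSeries_eq_univ_of_filtration (H : ℕ → AddSubgroup B) (hN : ∀ d, (H d).Normal)
    (hH : ∀ d, ∀ x ∈ H d, ∀ a,
      starOp x a ∈ H (d + 1) ∧ starOp a x ∈ H (d + 1) ∧ x + a - x - a ∈ H (d + 1))
    {D : ℕ} (h0 : H 0 = ⊤) (hD : H D = ⊥) : annSeries B D = Set.univ :=
  Set.eq_univ_of_univ_subset <| by
    simpa [h0] using subset_annSeries_of_filtration H hN hH D 0 (by rwa [zero_add])

end Annihilator

section Strong

theorem strongPow_zero : strongPow B 0 = Set.univ := by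
  rw [strongPow]

theorem zero_mem_strongPow : ∀ n, (0 : B) ∈ strongPow B n
  | 0 => by simp [strongPow_zero]
  | n + 1 => by rw [strongPow]; exact zero_mem _

theorem starOp_mem_strongPow {i j : ℕ} {x y : B} (hx : x ∈ strongPow B i)
    (hy : y ∈ strongPow B j) : starOp x y ∈ strongPow B (i + j + 1) := by
  rw [strongPow]
  exact subset_closure (Set.mem_iUnion.mpr ⟨⟨i, by omega⟩, x, hx, y, by simpa using hy, rfl⟩)

theorem closure_subset_strongPow_succ {n : ℕ} {X : Set B} (h : X ⊆ strongPow B (n + 1)) :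
    (closure X : Set B) ⊆ strongPow B (n + 1) := by
  rw [strongPow] at h ⊢
  exact (closure_le _).mpr h

theorem strongPow_succ_subset {n : ℕ} {K : AddSubgroup B}
    (h : ∀ i ≤ n, ∀ x ∈ strongPow B i, ∀ y ∈ strongPow B (n - i), starOp x y ∈ K) :
    strongPow B (n + 1) ⊆ K := by
  rw [strongPow]
  refine (closure_le _).mpr (Set.iUnion_subset fun i => ?_)
  rintro _ ⟨x, hx, y, hy, rfl⟩
  exact h i (by omega) x hx y hy

theorem leftPow_subset_strongPow : ∀ n, leftPow B n ⊆ strongPow B n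
  | 0 => by simp [leftPow, strongPow_zero]
  | n + 1 => closure_subset_strongPow_succ <| by
    rintro _ ⟨x, -, y, hy, rfl⟩
    simpa using starOp_mem_strongPow (i := 0) (by simp [strongPow_zero] : x ∈ strongPow B 0)
      (leftPow_subset_strongPow n hy)

theorem rightPow_subset_strongPow : ∀ n, rightPow B n ⊆ strongPow B n
  | 0 => by simp [rightPow, strongPow_zero]
  | n + 1 => closure_subset_strongPow_succ <| by
    rintro _ ⟨x, hx, y, -, rfl⟩
    exact starOp_mem_strongPow (j := 0) (rightPow_subset_strongPow n hx)
      (by simp [strongPow_zero])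

theorem leftNilpotent_of_stronglyNilpotent (h : StronglyNilpotent B) : LeftNilpotent B := by
  obtain ⟨n, hn⟩ := h
  exact ⟨n, (hn ▸ leftPow_subset_strongPow n).antisymm
    (Set.singleton_subset_iff.mpr (isLeftIdeal_leftPow n).zero_mem)⟩

theorem rightNilpotent_of_stronglyNilpotent (h : StronglyNilpotent B) : RightNilpotent B := by
  obtain ⟨n, hn⟩ := h
  exact ⟨n, (hn ▸ rightPow_subset_strongPow n).antisymm
    (Set.singleton_subset_iff.mpr (isAddIdeal_rightPow n).zero_mem)⟩

theorem strongPow_subset_annSeries :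
    ∀ k n j, 2 ^ k ≤ n + 1 → annSeries B (j + k) = Set.univ → strongPow B n ⊆ annSeries B j
  | 0, n, j, _, hj => by simp only [Nat.add_zero] at hj; simp [hj]
  | k + 1, 0, j, hk, _ => by
    have : 2 ≤ 2 ^ (k + 1) := Nat.le_self_pow (by omega) 2
    omega
  | k + 1, n + 1, j, hk, hj => by
    have ih := strongPow_subset_annSeries k
    have hj' : annSeries B (j + 1 + k) = Set.univ := by rwa [add_right_comm, add_assoc]
    refine strongPow_succ_subset (K := (isAddIdeal_annSeries j).toAddSubgroup)
      fun i hi x hx y hy => ?_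
    rw [pow_succ] at hk
    rcases le_total (2 ^ k) (i + 1) with hik | hik
    · exact (starOp_mem_annSeries (ih i (j + 1) hik hj' hx) y).1
    · exact (starOp_mem_annSeries (ih (n - i) (j + 1) (by omega) hj' hy) x).2

theorem stronglyNilpotent_of_annNilpotent (h : AnnNilpotent B) : StronglyNilpotent B := by
  obtain ⟨c, hc⟩ := h
  refine ⟨2 ^ c - 1, (strongPow_subset_annSeries c _ 0 (by omega) (by simpa using hc)).antisymm
    (Set.singleton_subset_iff.mpr (zero_mem_strongPow _))⟩

end Strong

section WeightFiltration

def graded (B : Type*) [SkewBrace B] (a b c : ℕ) : Set B :=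
  rightPow B a ∩ leftPow B b ∩ ((⊤ : AddSubgroup B).lowerCentralSeries c : Set B)

theorem isLeftIdeal_graded (a b c : ℕ) : IsLeftIdeal (graded B a b c) :=
  ((isAddIdeal_rightPow a).inter (isLeftIdeal_leftPow b)).inter
    (isLeftIdeal_lowerCentralSeries c)

def weightGen (B : Type*) [SkewBrace B] (m t d : ℕ) : Set B :=
  {x | ∃ a b c, d ≤ (a * t + c) * m + b ∧ x ∈ graded B a b c}

def weightFilt (B : Type*) [SkewBrace B] (m t d : ℕ) : AddSubgroup B :=
  closure (weightGen B m t d)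

variable {m t : ℕ}

theorem lam_mem_weightGen (g : B) {d : ℕ} {x : B} (hx : x ∈ weightGen B m t d) :
    lam g x ∈ weightGen B m t d :=
  let ⟨a, b, c, hw, hx⟩ := hx
  ⟨a, b, c, hw, (isLeftIdeal_graded a b c).lam_mem g hx⟩

theorem neg_mem_weightGen {d : ℕ} {x : B} (hx : x ∈ weightGen B m t d) :
    -x ∈ weightGen B m t d :=
  let ⟨a, b, c, hw, hx⟩ := hx
  ⟨a, b, c, hw, (isLeftIdeal_graded a b c).neg_mem hx⟩

theorem isLeftIdeal_weightFilt (d : ℕ) : IsLeftIdeal (weightFilt B m t d : Set B) :=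
  isLeftIdeal_closure fun g _ hx => lam_mem_weightGen g hx

theorem weightFilt_succ_le (d : ℕ) : weightFilt B m t (d + 1) ≤ weightFilt B m t d :=
  closure_mono fun _ ⟨a, b, c, hw, hx⟩ => ⟨a, b, c, by omega, hx⟩

theorem weightFilt_zero : weightFilt B m t 0 = ⊤ :=
  eq_top_iff.mpr fun x _ => subset_closure ⟨0, 0, 0, Nat.zero_le _, ⟨trivial, trivial⟩, mem_top x⟩

theorem addCommutator_mem_weightFilt_of_mem_weightGen (hL : leftPow B m = {0}) {d : ℕ} {x : B}
    (hx : x ∈ weightGen B m t d) (y : B) : x + y - x - y ∈ weightFilt B m t (d + 1) := by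
  obtain ⟨a, b, c, hw, ⟨hr, hl⟩, hc⟩ := hx
  rcases lt_or_ge b m with hb | hb
  · exact subset_closure ⟨a, 0, c + 1, by nlinarith,
      ⟨(isAddIdeal_rightPow a).addCommutator_mem hr y, trivial⟩,
      addCommutator_mem_lowerCentralSeries_succ hc y⟩
  · simp [eq_zero_of_mem_leftPow hL hb hl]

theorem weightFilt_normal (hL : leftPow B m = {0}) (d : ℕ) : (weightFilt B m t d).Normal :=
  normal_closure_of_add_sub_mem fun c z hz => by
    rw [show c + z - c = z + (-z + c - -z - c) by simp [sub_eq_add_neg, add_assoc]]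
    exact add_mem (subset_closure hz) (weightFilt_succ_le d
      (addCommutator_mem_weightFilt_of_mem_weightGen hL (neg_mem_weightGen hz) c))

theorem addCommutator_mem_weightFilt (hL : leftPow B m = {0}) {d : ℕ} {x : B}
    (hx : x ∈ weightFilt B m t d) (y : B) : x + y - x - y ∈ weightFilt B m t (d + 1) :=
  addCommutator_mem_of_mem_closure (weightFilt_normal hL _)
    (fun _ hx y => addCommutator_mem_weightFilt_of_mem_weightGen hL hx y) hx y

theorem starOp_mem_weightFilt_right (hL : leftPow B m = {0}) {d : ℕ} {y : B}
    (hy : y ∈ weightFilt B m t d) (x : B) : starOp x y ∈ weightFilt B m t (d + 1) := by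
  refine starOp_mem_of_mem_closure_right (weightFilt_normal hL _) (fun x y hy => ?_) hy x
  obtain ⟨a, b, c, hw, hy⟩ := hy
  have h := (isLeftIdeal_graded a b c).starOp_mem_right x hy
  exact subset_closure
    ⟨a, b + 1, c, by omega, ⟨h.1.1, starOp_mem_leftPow_succ x hy.1.2⟩, h.2⟩

theorem starOp_mem_weightFilt_left (hL : leftPow B m = {0})
    (hC : (⊤ : AddSubgroup B).lowerCentralSeries t = ⊥) {d : ℕ} {x : B}
    (hx : x ∈ weightFilt B m t d) (y : B) : starOp x y ∈ weightFilt B m t (d + 1) := by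
  refine starOp_mem_of_mem_closure_left (fun g _ hx => lam_mem_weightGen g hx)
    (isLeftIdeal_weightFilt _) (fun x hx y => ?_) hx y
  obtain ⟨a, b, c, hw, ⟨hr, hl⟩, hc⟩ := hx
  rcases lt_or_ge b m with hb | hb
  · rcases lt_or_ge c t with hct | hct
    · exact subset_closure ⟨a + 1, 0, 0, by nlinarith,
        ⟨starOp_mem_rightPow_succ hr y, trivial⟩, mem_top _⟩
    · simp [eq_zero_of_mem_lowerCentralSeries hC hct hc, zero_starOp]
  · simp [eq_zero_of_mem_leftPow hL hb hl, zero_starOp]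

theorem weightFilt_eq_bot {s : ℕ} (hR : rightPow B s = {0}) (hL : leftPow B m = {0})
    (hC : (⊤ : AddSubgroup B).lowerCentralSeries t = ⊥) : weightFilt B m t (s * t * m) = ⊥ := by
  refine closure_eq_bot_iff.mpr fun x ⟨a, b, c, hw, ⟨hr, hl⟩, hc⟩ => ?_
  rcases lt_or_ge a s with has | has
  · rcases lt_or_ge b m with hb | hb
    · rcases lt_or_ge c t with hct | hct
      · have hst : (a * t + c + 1) * m ≤ s * t * m :=
          Nat.mul_le_mul_right m (by nlinarith [Nat.mul_le_mul_right t (show a + 1 ≤ s from has)])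
        exact absurd hw (by nlinarith)
      · exact eq_zero_of_mem_lowerCentralSeries hC hct hc
    · exact eq_zero_of_mem_leftPow hL hb hl
  · exact eq_zero_of_mem_rightPow hR has hr

end WeightFiltration

theorem annNilpotent_of_leftNilpotent_of_rightNilpotent
    (hnt : Group.IsNilpotent (Multiplicative B)) (hL : LeftNilpotent B) (hR : RightNilpotent B) :
    AnnNilpotent B := by
  obtain ⟨m, hm⟩ := hL
  obtain ⟨s, hs⟩ := hR
  obtain ⟨t, ht⟩ := AddGroup.exists_lowerCentralSeries_eq_bot_of_multiplicative hnt
  refine ⟨s * t * m, annSeries_eq_univ_of_filtration (weightFilt B m t) (weightFilt_normal hm)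
    (fun d x hx a => ?_) weightFilt_zero (weightFilt_eq_bot hs hm ht)⟩
  exact ⟨starOp_mem_weightFilt_left hm ht hx a, starOp_mem_weightFilt_right hm hx a,
    addCommutator_mem_weightFilt hm hx a⟩

/-- Corollary 2.9: for a skew brace of nilpotent type the following are
equivalent: (1) annihilator nilpotent; (2) left and right nilpotent;
(3) strongly nilpotent. -/
theorem stmt2 {B : Type*} [SkewBrace B]
    (hnt : Group.IsNilpotent (Multiplicative B)) :
    (AnnNilpotent B ↔ LeftNilpotent B ∧ RightNilpotent B) ∧
    (AnnNilpotent B ↔ StronglyNilpotent B) := by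
  have hAS : AnnNilpotent B → StronglyNilpotent B := stronglyNilpotent_of_annNilpotent
  have hSLR : StronglyNilpotent B → LeftNilpotent B ∧ RightNilpotent B := fun h =>
    ⟨leftNilpotent_of_stronglyNilpotent h, rightNilpotent_of_stronglyNilpotent h⟩
  have hLRA : LeftNilpotent B ∧ RightNilpotent B → AnnNilpotent B := fun h =>
    annNilpotent_of_leftNilpotent_of_rightNilpotent hnt h.1 h.2
  exact ⟨⟨hSLR ∘ hAS, hLRA⟩, ⟨hAS, hLRA ∘ hSLR⟩⟩

end SkewBrace
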